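/- arXiv:2401.08893 — 2 statements merged into one kernel-verified Lean document; each statement's English description precedes it below -/
import Mathlib

section
/- Updates approximately follow a descent direction (scalar form of Lemma 5.1 used in the proof of Theorem 3). Let ε > 0, R > 0, a ≥ 0 be real constants, and let g be a square-integrable real random variable with E[g] = G and E[g²] ≤ R². Define the random variable ψ = a + g² and the constant ψ̃ = a + E[g²]. Then E[ G·g / sqrt(ε + ψ) ] ≥ G²/(2·sqrt(ε + ψ̃)) − 2R · E[ g²/(ε + ψ) ]. -/
open MeasureTheory

set_option maxHeartbeats 1000000


lemma descent_helper (c S a b lam : ℝ) (hc : 0 < c) (hS : 0 ≤ S)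
    (ha : 0 ≤ a) (hb : 0 ≤ b) (hlam : 0 < lam) :
    a * b * (S + b ^ 2) /
        (Real.sqrt (c + b ^ 2) * Real.sqrt (c + S) *
          (Real.sqrt (c + b ^ 2) + Real.sqrt (c + S)))
      ≤ a ^ 2 * S / (4 * (c + S) * Real.sqrt (c + S))
        + S / Real.sqrt (c + S) * (b ^ 2 / (c + b ^ 2))
        + a * lam / (2 * Real.sqrt (c + S)) * b ^ 2
        + a / (2 * lam * Real.sqrt (c + S)) * (b ^ 2 / (c + b ^ 2)) := by
  set x := Real.sqrt (c + b ^ 2) with hxdef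
  set z := Real.sqrt (c + S) with hzdef
  have hx : 0 < x := Real.sqrt_pos.2 (by positivity)
  have hz : 0 < z := Real.sqrt_pos.2 (by positivity)
  have hx2 : x ^ 2 = c + b ^ 2 := Real.sq_sqrt (by positivity)
  have hz2 : z ^ 2 = c + S := Real.sq_sqrt (by positivity)
  have hbx : b ≤ x := by nlinarith [hx2, hc]
  have hsplit : a * b * (S + b ^ 2) / (x * z * (x + z))
      = a * b * S / (x * z * (x + z)) + a * b * b ^ 2 / (x * z * (x + z)) := by
    rw [← add_div]; ring_nf
  rw [hsplit]
  have hS1 : a * b * S / (x * z * (x + z)) ≤ a * b * S / (x * (z * z)) := by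
    apply div_le_div_of_nonneg_left (by positivity) (by positivity)
    nlinarith
  have hS2 : a * b * S / (x * (z * z))
      ≤ a ^ 2 * S / (4 * (c + S) * z) + S / z * (b ^ 2 / (c + b ^ 2)) := by
    rw [← hz2, ← hx2]
    have e1 : a * b * S / (x * (z * z)) = S * (4 * (a * b * z * x)) / (4 * z ^ 3 * x ^ 2) := by
      field_simp
    have e2 : a ^ 2 * S / (4 * z ^ 2 * z) + S / z * (b ^ 2 / x ^ 2)
        = S * (a ^ 2 * x ^ 2 + 4 * b ^ 2 * z ^ 2) / (4 * z ^ 3 * x ^ 2) := by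
      field_simp
    rw [e1, e2]
    apply div_le_div_of_nonneg_right ?_ (by positivity)
    nlinarith [mul_nonneg hS (sq_nonneg (a * x - 2 * b * z))]
  have hC1 : a * b * b ^ 2 / (x * z * (x + z)) ≤ a * b * b ^ 2 / ((x * x) * z) := by
    apply div_le_div_of_nonneg_left (by positivity) (by positivity)
    nlinarith
  have hC2 : a * b * b ^ 2 / ((x * x) * z) ≤ a * b ^ 2 / (x * z) := by
    rw [div_le_div_iff₀ (by positivity) (by positivity)]
    nlinarith [mul_nonneg (mul_nonneg (mul_nonneg (mul_nonneg ha (sq_nonneg b)) hx.le) hz.le)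
      (sub_nonneg.2 hbx)]
  have hC3 : a * b ^ 2 / (x * z)
      ≤ a * lam / (2 * z) * b ^ 2 + a / (2 * lam * z) * (b ^ 2 / (c + b ^ 2)) := by
    rw [← hx2]
    have e1 : a * lam / (2 * z) * b ^ 2 + a / (2 * lam * z) * (b ^ 2 / x ^ 2)
        = a * b ^ 2 * (lam ^ 2 * x ^ 2 + 1) / (2 * lam * z * x ^ 2) := by
      field_simp
    have e2 : a * b ^ 2 / (x * z) = a * b ^ 2 * (2 * lam * x) / (2 * lam * z * x ^ 2) := by
      field_simp
    rw [e1, e2]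
    apply div_le_div_of_nonneg_right ?_ (by positivity)
    nlinarith [mul_nonneg (mul_nonneg ha (sq_nonneg b)) (sq_nonneg (lam * x - 1))]
  linarith


lemma descent_pointwise (c S G lam y : ℝ) (hc : 0 < c) (hS : 0 ≤ S) (hlam : 0 < lam)
    (helper : |G| * |y| * (S + |y| ^ 2) /
        (Real.sqrt (c + |y| ^ 2) * Real.sqrt (c + S) *
          (Real.sqrt (c + |y| ^ 2) + Real.sqrt (c + S)))
      ≤ |G| ^ 2 * S / (4 * (c + S) * Real.sqrt (c + S))
        + S / Real.sqrt (c + S) * (|y| ^ 2 / (c + |y| ^ 2))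
        + |G| * lam / (2 * Real.sqrt (c + S)) * |y| ^ 2
        + |G| / (2 * lam * Real.sqrt (c + S)) * (|y| ^ 2 / (c + |y| ^ 2))) :
    G * y / Real.sqrt (c + S)
      - (G ^ 2 * S / (4 * (c + S) * Real.sqrt (c + S))
         + S / Real.sqrt (c + S) * (y ^ 2 / (c + y ^ 2))
         + |G| * lam / (2 * Real.sqrt (c + S)) * y ^ 2
         + |G| / (2 * lam * Real.sqrt (c + S)) * (y ^ 2 / (c + y ^ 2)))
      ≤ G * y / Real.sqrt (c + y ^ 2) := by
  rw [sq_abs y, sq_abs G] at helper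
  set x := Real.sqrt (c + y ^ 2) with hxdef
  set z := Real.sqrt (c + S) with hzdef
  have hx : 0 < x := Real.sqrt_pos.2 (by positivity)
  have hz : 0 < z := Real.sqrt_pos.2 (by positivity)
  have hx2 : x ^ 2 = c + y ^ 2 := Real.sq_sqrt (by positivity)
  have hz2 : z ^ 2 = c + S := Real.sq_sqrt (by positivity)
  -- step A : G*y/z - G*y/x ≤ |G|*|y|*(S+y^2)/(x*z*(x+z))
  have hxz : |x - z| * (x + z) = |y ^ 2 - S| := by
    rw [← abs_of_nonneg (show (0:ℝ) ≤ x + z by positivity), ← abs_mul,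
      show (x - z) * (x + z) = x ^ 2 - z ^ 2 by ring, hx2, hz2]
    congr 1; ring
  have hA1 : G * y / z - G * y / x = G * y * (x - z) / (z * x) := by
    field_simp
  have hA2 : G * y * (x - z) / (z * x) ≤ |G| * |y| * |x - z| / (z * x) := by
    apply div_le_div_of_nonneg_right ?_ (by positivity)
    calc G * y * (x - z) ≤ |G * y * (x - z)| := le_abs_self _
      _ = |G| * |y| * |x - z| := by rw [abs_mul, abs_mul]
  have hA3 : |x - z| ≤ (S + y ^ 2) / (x + z) := by
    rw [le_div_iff₀ (by positivity)]
    calc |x - z| * (x + z) = |y ^ 2 - S| := hxz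
      _ ≤ S + y ^ 2 := abs_le.2 ⟨by nlinarith [sq_nonneg y], by nlinarith [sq_nonneg y]⟩
  have hk : |x - z| * (x + z) ≤ S + y ^ 2 := by
    rw [hxz]
    exact abs_le.2 ⟨by nlinarith [sq_nonneg y], by nlinarith [sq_nonneg y]⟩
  have hA4 : |G| * |y| * |x - z| / (z * x)
      ≤ |G| * |y| * (S + y ^ 2) / (x * z * (x + z)) := by
    rw [div_le_div_iff₀ (by positivity) (by positivity)]
    nlinarith [mul_le_mul_of_nonneg_left hk
      (show (0:ℝ) ≤ |G| * |y| * (z * x) by positivity)]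
  linarith


/-- Scalar form of Lemma 5.1: updates approximately follow a descent direction. -/
theorem descent_direction_scalar {Ω : Type*} [MeasurableSpace Ω]
    (P : Measure Ω) [IsProbabilityMeasure P]
    (ε R a G : ℝ) (hε : 0 < ε) (hR : 0 < R) (ha : 0 ≤ a)
    (g : Ω → ℝ) (hg : MemLp g 2 P)
    (hmean : ∫ ω, g ω ∂P = G)
    (hsq : ∫ ω, (g ω) ^ 2 ∂P ≤ R ^ 2) :
    ∫ ω, G * g ω / Real.sqrt (ε + (a + (g ω) ^ 2)) ∂P ≥
      G ^ 2 / (2 * Real.sqrt (ε + (a + ∫ ω, (g ω) ^ 2 ∂P)))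
        - 2 * R * ∫ ω, (g ω) ^ 2 / (ε + (a + (g ω) ^ 2)) ∂P := by
  have hgi : Integrable g P := hg.integrable one_le_two
  have hg2i : Integrable (fun ω => g ω ^ 2) P := hg.integrable_sq
  set c : ℝ := ε + a with hc_def
  have hc : 0 < c := by positivity
  have hrw : ∀ x : ℝ, ε + (a + x) = c + x := by intro x; rw [hc_def]; ring
  simp only [hrw]
  set S : ℝ := ∫ ω, g ω ^ 2 ∂P with hS_def
  have hS0 : 0 ≤ S := by rw [hS_def]; exact integral_nonneg fun ω => sq_nonneg _
  set z : ℝ := Real.sqrt (c + S) with hz_def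
  have hz : 0 < z := Real.sqrt_pos.2 (by positivity)
  have hz2 : z ^ 2 = c + S := Real.sq_sqrt (by positivity)
  -- integrability of q
  have hmg2 : AEStronglyMeasurable (fun ω => g ω ^ 2) P := hg2i.aestronglyMeasurable
  have hqi : Integrable (fun ω => g ω ^ 2 / (c + g ω ^ 2)) P := by
    refine Integrable.mono' (integrable_const 1)
      ((hg2i.aemeasurable.div (aemeasurable_const.add hg2i.aemeasurable)).aestronglyMeasurable) ?_
    filter_upwards with ω
    rw [Real.norm_eq_abs, abs_of_nonneg (by positivity),
      div_le_one (by positivity)]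
    nlinarith [sq_nonneg (g ω)]
  set Q : ℝ := ∫ ω, g ω ^ 2 / (c + g ω ^ 2) ∂P with hQ_def
  have hQ0 : 0 ≤ Q := by rw [hQ_def]; exact integral_nonneg fun ω => by positivity
  -- case G = 0
  by_cases hG : G = 0
  · subst hG
    simp only [zero_mul, zero_div, integral_zero, ge_iff_le, zero_pow, ne_eq,
      OfNat.ofNat_ne_zero, not_false_eq_true]
    have : 0 ≤ 2 * R * Q := by positivity
    linarith
  -- variance bound : G^2 ≤ S
  have hvar : G ^ 2 ≤ S := by
    have h0 : (0:ℝ) ≤ ∫ ω, (g ω - G) ^ 2 ∂P := integral_nonneg fun ω => sq_nonneg _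
    have e : (fun ω => (g ω - G) ^ 2) = fun ω => (g ω ^ 2 + (-(2 * G)) * g ω) + G ^ 2 := by
      funext ω; ring
    have i1 : Integrable (fun ω => g ω ^ 2 + (-(2 * G)) * g ω) P :=
      hg2i.add (hgi.const_mul _)
    rw [e, integral_add i1 (integrable_const _),
      integral_add hg2i (hgi.const_mul _), integral_const_mul, hmean,
      integral_const, ← hS_def] at h0
    simp only [measure_univ, probReal_univ, ENNReal.toReal_one, smul_eq_mul, one_mul] at h0
    nlinarith [h0]
  have hSpos : 0 < S := lt_of_lt_of_le (by positivity) hvar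
  set s : ℝ := Real.sqrt S with hs_def
  have hs : 0 < s := Real.sqrt_pos.2 hSpos
  have hss : s ^ 2 = S := Real.sq_sqrt hS0
  have hsR : s ≤ R := by
    rw [hs_def, show R = Real.sqrt (R ^ 2) from (Real.sqrt_sq hR.le).symm]
    exact Real.sqrt_le_sqrt hsq
  have hsz : s ≤ z := by
    rw [hs_def, hz_def]; exact Real.sqrt_le_sqrt (by linarith)
  have habs : |G| * |G| = G ^ 2 := by rw [← sq_abs G]; ring
  set lam : ℝ := |G| / (2 * R * s) with hlam_def
  have hlam : 0 < lam := div_pos (abs_pos.2 hG) (by positivity)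
  -- integrability of integrands
  have hfi : Integrable (fun ω => G * g ω / Real.sqrt (c + g ω ^ 2)) P := by
    refine Integrable.mono' (hgi.abs.const_mul (|G| / Real.sqrt c))
      (((aemeasurable_const.mul hgi.aemeasurable).div
        (Real.continuous_sqrt.measurable.comp_aemeasurable
          (aemeasurable_const.add hg2i.aemeasurable))).aestronglyMeasurable) ?_
    filter_upwards with ω
    have hxle : Real.sqrt c ≤ Real.sqrt (c + g ω ^ 2) :=
      Real.sqrt_le_sqrt (by nlinarith [sq_nonneg (g ω)])
    rw [Real.norm_eq_abs, abs_div, abs_mul, abs_of_nonneg (Real.sqrt_nonneg _)]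
    calc |G| * |g ω| / Real.sqrt (c + g ω ^ 2)
        ≤ |G| * |g ω| / Real.sqrt c :=
          by apply div_le_div_of_nonneg_left (by positivity) (Real.sqrt_pos.2 hc) hxle
      _ = |G| / Real.sqrt c * |g ω| := by ring
  have hLi : Integrable (fun ω => G * g ω / z
      - ((G ^ 2 * S / (4 * (c + S) * z) + S / z * (g ω ^ 2 / (c + g ω ^ 2)))
        + |G| * lam / (2 * z) * g ω ^ 2
        + |G| / (2 * lam * z) * (g ω ^ 2 / (c + g ω ^ 2)))) P := by
    exact ((hgi.const_mul G).div_const z).sub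
      ((((integrable_const _).add (hqi.const_mul _)).add (hg2i.const_mul _)).add
        (hqi.const_mul _))
  -- pointwise bound
  have hpt : (fun ω => G * g ω / z
      - ((G ^ 2 * S / (4 * (c + S) * z) + S / z * (g ω ^ 2 / (c + g ω ^ 2)))
        + |G| * lam / (2 * z) * g ω ^ 2
        + |G| / (2 * lam * z) * (g ω ^ 2 / (c + g ω ^ 2))))
      ≤ fun ω => G * g ω / Real.sqrt (c + g ω ^ 2) := by
    intro ω
    have h := descent_helper c S |G| |g ω| lam hc hS0 (abs_nonneg G) (abs_nonneg _) hlam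
    have h2 := descent_pointwise c S G lam (g ω) hc hS0 hlam (by
      simpa using h)
    simp only [hz_def]
    linarith [h2]
  have hmono := integral_mono hLi hfi hpt
  -- compute the lower integral
  have hIL : ∫ ω, (G * g ω / z
      - ((G ^ 2 * S / (4 * (c + S) * z) + S / z * (g ω ^ 2 / (c + g ω ^ 2)))
        + |G| * lam / (2 * z) * g ω ^ 2
        + |G| / (2 * lam * z) * (g ω ^ 2 / (c + g ω ^ 2)))) ∂P
      = G ^ 2 / z
        - ((G ^ 2 * S / (4 * (c + S) * z) + S / z * Q)
          + |G| * lam / (2 * z) * S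
          + |G| / (2 * lam * z) * Q) := by
    have i0 : Integrable (fun ω => G * g ω / z) P := (hgi.const_mul G).div_const z
    have i1 : Integrable (fun ω => G ^ 2 * S / (4 * (c + S) * z)
        + S / z * (g ω ^ 2 / (c + g ω ^ 2))) P := (integrable_const _).add (hqi.const_mul _)
    have i2 : Integrable (fun ω => (G ^ 2 * S / (4 * (c + S) * z)
        + S / z * (g ω ^ 2 / (c + g ω ^ 2))) + |G| * lam / (2 * z) * g ω ^ 2) P :=
      i1.add (hg2i.const_mul _)
    have i3 : Integrable (fun ω => ((G ^ 2 * S / (4 * (c + S) * z)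
        + S / z * (g ω ^ 2 / (c + g ω ^ 2))) + |G| * lam / (2 * z) * g ω ^ 2)
        + |G| / (2 * lam * z) * (g ω ^ 2 / (c + g ω ^ 2))) P := i2.add (hqi.const_mul _)
    rw [integral_sub i0 i3, integral_add i2 (hqi.const_mul _),
      integral_add i1 (hg2i.const_mul _),
      integral_add (integrable_const _) (hqi.const_mul _),
      integral_const_mul, integral_const_mul, integral_const_mul,
      integral_const, integral_div, integral_const_mul, hmean, ← hS_def, ← hQ_def]
    simp only [measure_univ, probReal_univ, ENNReal.toReal_one, smul_eq_mul, one_mul]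
    ring
  rw [hIL] at hmono
  -- final arithmetic
  have h1 : G ^ 2 * S / (4 * (c + S) * z) ≤ G ^ 2 / (4 * z) := by
    rw [div_le_div_iff₀ (by positivity) (by positivity)]
    nlinarith [mul_nonneg (mul_nonneg (sq_nonneg G) hz.le) hc.le]
  have h2 : S / z * Q ≤ R * Q := by
    refine mul_le_mul_of_nonneg_right ?_ hQ0
    calc S / z ≤ S / s := by apply div_le_div_of_nonneg_left hS0 hs hsz
      _ = s := by rw [← hss]; field_simp
      _ ≤ R := hsR
  have h3 : |G| * lam / (2 * z) * S ≤ G ^ 2 / (4 * z) := by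
    have e3 : |G| * lam / (2 * z) * S = G ^ 2 * s / (4 * R * z) := by
      rw [hlam_def, ← habs, ← hss]; field_simp; ring
    rw [e3, div_le_div_iff₀ (by positivity) (by positivity)]
    nlinarith [mul_le_mul_of_nonneg_left hsR (show (0:ℝ) ≤ 4 * G ^ 2 * z by positivity)]
  have h4 : |G| / (2 * lam * z) * Q ≤ R * Q := by
    refine mul_le_mul_of_nonneg_right ?_ hQ0
    have e4 : |G| / (2 * lam * z) = R * s / z := by
      rw [hlam_def]
      have hGne : |G| ≠ 0 := abs_ne_zero.2 hG
      field_simp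
    rw [e4, div_le_iff₀ hz]
    nlinarith [mul_le_mul_of_nonneg_left hsz hR.le]
  have hsplit : G ^ 2 / z = G ^ 2 / (2 * z) + G ^ 2 / (4 * z) + G ^ 2 / (4 * z) := by
    field_simp; ring
  rw [ge_iff_le]
  linarith [hmono, h1, h2, h3, h4]
end

section
/- Sum bound with momentum numerator (Lemma 4). Let 0 ≤ β₁ < 1, 0 ≤ β₂ < 1, ε > 0, and let a_1, …, a_T be real numbers. Define c_t = Σ_{τ=1}^t β₁^{t−τ}·a_τ and b_t = Σ_{τ=1}^t Σ_{j=1}^τ β₂^{τ−j}·a_j². Then Σ_{t=1}^T c_t²/(ε + b_t) ≤ (1/(1−β₁)²) · ln(1 + b_T/ε). -/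
/-!
Cauchy–Schwarz against the geometric weights `β₁ ^ (t - τ)` gives
`c_t² ≤ (1 - β₁)⁻¹ ∑_{τ ≤ t} β₁ ^ (t - τ) a_τ²`. Since `b` is nondecreasing, each `a_τ²` may
then be divided by the smaller `ε + b_τ`, and exchanging the order of summation spends a second
factor `(1 - β₁)⁻¹`. What remains is `∑_τ a_τ² / (ε + b_τ)`, and `a_τ² ≤ b_τ - b_{τ-1}` makes
this a lower Riemann sum of `∫ dx / x` from `ε` to `ε + b_T`.
-/

open Finset Real

theorem sum_pow_le_inv_one_sub_of_injOn {ι : Type*} {r : ℝ} {s : Finset ι} {f : ι → ℕ}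
    (hr0 : 0 ≤ r) (hr1 : r < 1) (hf : Set.InjOn f s) :
    ∑ i ∈ s, r ^ f i ≤ (1 - r)⁻¹ := by
  rw [← sum_image hf, ← tsum_geometric_of_lt_one hr0 hr1]
  exact (summable_geometric_of_lt_one hr0 hr1).sum_le_tsum _ fun _ _ => pow_nonneg hr0 _

section Momentum

variable {r : ℝ}

theorem sum_Icc_pow_sub_le (hr0 : 0 ≤ r) (hr1 : r < 1) (m t : ℕ) :
    ∑ τ ∈ Icc m t, r ^ (t - τ) ≤ (1 - r)⁻¹ :=
  sum_pow_le_inv_one_sub_of_injOn hr0 hr1 fun x hx y hy (h : t - x = t - y) => by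
    simp only [coe_Icc, Set.mem_Icc] at hx hy; omega

theorem sum_Icc_pow_sub_left_le (hr0 : 0 ≤ r) (hr1 : r < 1) (m T : ℕ) :
    ∑ t ∈ Icc m T, r ^ (t - m) ≤ (1 - r)⁻¹ :=
  sum_pow_le_inv_one_sub_of_injOn hr0 hr1 fun x hx y hy (h : x - m = y - m) => by
    simp only [coe_Icc, Set.mem_Icc] at hx hy; omega

theorem sq_sum_pow_sub_mul_le (hr0 : 0 ≤ r) (hr1 : r < 1) (a : ℕ → ℝ) (t : ℕ) :
    (∑ τ ∈ Icc 1 t, r ^ (t - τ) * a τ) ^ 2 ≤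
      (1 - r)⁻¹ * ∑ τ ∈ Icc 1 t, r ^ (t - τ) * a τ ^ 2 := by
  have hcs := sum_sq_le_sum_mul_sum_of_sq_le_mul (Icc 1 t) (r := fun τ => r ^ (t - τ) * a τ)
    (f := fun τ => r ^ (t - τ)) (g := fun τ => r ^ (t - τ) * a τ ^ 2)
    (fun _ _ => pow_nonneg hr0 _) (fun _ _ => by positivity) (fun _ _ => le_of_eq (by ring))
  exact hcs.trans (mul_le_mul_of_nonneg_right (sum_Icc_pow_sub_le hr0 hr1 1 t)
    (sum_nonneg fun _ _ => by positivity))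

theorem sum_sq_sum_pow_sub_mul_div_le (hr0 : 0 ≤ r) (hr1 : r < 1) (a D : ℕ → ℝ)
    (hD : ∀ t, 0 < D t) (hDmono : Monotone D) (T : ℕ) :
    ∑ t ∈ Icc 1 T, (∑ τ ∈ Icc 1 t, r ^ (t - τ) * a τ) ^ 2 / D t ≤
      1 / (1 - r) ^ 2 * ∑ τ ∈ Icc 1 T, a τ ^ 2 / D τ := by
  have hinv : 0 ≤ (1 - r)⁻¹ := inv_nonneg.2 (by linarith)
  have hq : ∀ τ, 0 ≤ a τ ^ 2 / D τ := fun τ => div_nonneg (sq_nonneg _) (hD τ).le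
  calc ∑ t ∈ Icc 1 T, (∑ τ ∈ Icc 1 t, r ^ (t - τ) * a τ) ^ 2 / D t
      ≤ ∑ t ∈ Icc 1 T, (1 - r)⁻¹ * ∑ τ ∈ Icc 1 t, r ^ (t - τ) * (a τ ^ 2 / D τ) := by
        refine sum_le_sum fun t _ => ?_
        rw [div_le_iff₀ (hD t), mul_assoc, sum_mul]
        refine (sq_sum_pow_sub_mul_le hr0 hr1 a t).trans
          (mul_le_mul_of_nonneg_left (sum_le_sum fun τ hτ => ?_) hinv)
        rw [mul_assoc, div_mul_eq_mul_div]
        refine mul_le_mul_of_nonneg_left ((le_div_iff₀ (hD τ)).2 ?_) (pow_nonneg hr0 _)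
        exact mul_le_mul_of_nonneg_left (hDmono (mem_Icc.1 hτ).2) (sq_nonneg _)
    _ = (1 - r)⁻¹ * ∑ τ ∈ Icc 1 T, (∑ t ∈ Icc τ T, r ^ (t - τ)) * (a τ ^ 2 / D τ) := by
        simp_rw [← mul_sum, sum_mul]
        exact congrArg _ (sum_comm' fun t τ => by simp only [mem_Icc]; omega)
    _ ≤ (1 - r)⁻¹ * ∑ τ ∈ Icc 1 T, (1 - r)⁻¹ * (a τ ^ 2 / D τ) :=
        mul_le_mul_of_nonneg_left (sum_le_sum fun τ _ =>
          mul_le_mul_of_nonneg_right (sum_Icc_pow_sub_left_le hr0 hr1 τ T) (hq τ)) hinv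
    _ = 1 / (1 - r) ^ 2 * ∑ τ ∈ Icc 1 T, a τ ^ 2 / D τ := by
        rw [← mul_sum, ← mul_assoc, one_div, sq, mul_inv]

end Momentum

theorem sub_div_le_log_sub_log {x y : ℝ} (hx : 0 < x) (hy : 0 < y) :
    (y - x) / y ≤ log y - log x := by
  have h := one_sub_inv_le_log_of_pos (div_pos hy hx)
  rwa [inv_div, log_div hy.ne' hx.ne', one_sub_div hy.ne'] at h

theorem sum_Icc_div_le_log_sub_log (d S : ℕ → ℝ) (hS : ∀ t, 0 < S t)
    (hd : ∀ k, d (k + 1) ≤ S (k + 1) - S k) (T : ℕ) :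
    ∑ t ∈ Icc 1 T, d t / S t ≤ log (S T) - log (S 0) := by
  induction T with
  | zero => simp
  | succ T ih =>
    rw [sum_Icc_succ_top (by omega)]
    have hstep := (div_le_div_of_nonneg_right (hd T) (hS (T + 1)).le).trans
      (sub_div_le_log_sub_log (hS T) (hS (T + 1)))
    linarith

theorem sq_succ_le_sub_of_eq_sum_Icc_sum_Icc (β : ℝ) (hβ : 0 ≤ β) (a b : ℕ → ℝ)
    (hb : ∀ t, b t = ∑ τ ∈ Icc 1 t, ∑ j ∈ Icc 1 τ, β ^ (τ - j) * a j ^ 2) (k : ℕ) :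
    a (k + 1) ^ 2 ≤ b (k + 1) - b k := by
  have hlast : β ^ (k + 1 - (k + 1)) * a (k + 1) ^ 2 ≤
      ∑ j ∈ Icc 1 (k + 1), β ^ (k + 1 - j) * a j ^ 2 :=
    single_le_sum (f := fun j => β ^ (k + 1 - j) * a j ^ 2) (fun j _ => by positivity)
      (mem_Icc.2 ⟨Nat.le_add_left 1 k, le_rfl⟩)
  rw [hb, hb, sum_Icc_succ_top (by omega)]
  simpa using hlast

theorem sum_bound_momentum_general (β₁ β₂ ε : ℝ) (hβ₁0 : 0 ≤ β₁) (hβ₁1 : β₁ < 1)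
    (hβ₂0 : 0 ≤ β₂) (hε : 0 < ε) (T : ℕ) (a : ℕ → ℝ)
    (c b : ℕ → ℝ)
    (hc : ∀ t, c t = ∑ τ ∈ Finset.Icc 1 t, β₁ ^ (t - τ) * a τ)
    (hb : ∀ t, b t = ∑ τ ∈ Finset.Icc 1 t, ∑ j ∈ Finset.Icc 1 τ, β₂ ^ (τ - j) * (a j) ^ 2) :
    ∑ t ∈ Finset.Icc 1 T, (c t) ^ 2 / (ε + b t) ≤
      (1 / (1 - β₁) ^ 2) * Real.log (1 + b T / ε) := by
  have hinc := sq_succ_le_sub_of_eq_sum_Icc_sum_Icc β₂ hβ₂0 a b hb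
  have hmono : Monotone b := monotone_nat_of_le_succ fun k => by
    linarith [hinc k, sq_nonneg (a (k + 1))]
  have hb0 : b 0 = 0 := by simp [hb]
  have hpos : ∀ t, 0 < ε + b t := fun t => by linarith [hmono (Nat.zero_le t)]
  have hlog := sum_Icc_div_le_log_sub_log (fun t => a t ^ 2) (fun t => ε + b t) hpos
    (fun k => by linarith [hinc k]) T
  rw [hb0, add_zero, ← log_div (hpos T).ne' hε.ne', add_div, div_self hε.ne'] at hlog
  have hDmono : Monotone fun t => ε + b t := fun _ _ h => (add_le_add_iff_left ε).2 (hmono h)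
  simp_rw [hc]
  exact (sum_sq_sum_pow_sub_mul_div_le hβ₁0 hβ₁1 a _ hpos hDmono T).trans
    (mul_le_mul_of_nonneg_left hlog (by positivity))

/-- Lemma 4: sum bound with momentum numerator. -/
theorem sum_bound_momentum (β₁ β₂ ε : ℝ) (hβ₁0 : 0 ≤ β₁) (hβ₁1 : β₁ < 1)
    (hβ₂0 : 0 ≤ β₂) (hβ₂1 : β₂ < 1) (hε : 0 < ε) (T : ℕ) (a : ℕ → ℝ)
    (c b : ℕ → ℝ)
    (hc : ∀ t, c t = ∑ τ ∈ Finset.Icc 1 t, β₁ ^ (t - τ) * a τ)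
    (hb : ∀ t, b t = ∑ τ ∈ Finset.Icc 1 t, ∑ j ∈ Finset.Icc 1 τ, β₂ ^ (τ - j) * (a j) ^ 2) :
    ∑ t ∈ Finset.Icc 1 T, (c t) ^ 2 / (ε + b t) ≤
      (1 / (1 - β₁) ^ 2) * Real.log (1 + b T / ε) :=
  sum_bound_momentum_general β₁ β₂ ε hβ₁0 hβ₁1 hβ₂0 hε T a c b hc hb
end
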